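/- Let U be a Hopf algebra over k and P a right U-module. With B = (−) ⊗_k U, D = U ⊗_k (−), θ as above, the triple (P ⊗_k −, σ, γ) with σ_X(p ⊗ x ⊗ u) = pu_{(1)} ⊗ x ⊗ u_{(2)} and γ_X(p ⊗ u ⊗ x) = u ⊗ p ⊗ x is a factorisation of the mixed distributive law θ : B ⟶ D; that is, σ is a distributive law from the monad B to P ⊗_k (−), γ is a distributive law from P ⊗_k (−) to the comonad D, and the Yang–Baxter hexagon with θ commutes. -/

import Mathlib

/-!
`σ_X((p ⊗ x) ⊗ u) = (p ⊗ x ⊗ 1)·u` for the right action `(p ⊗ x ⊗ w)·u = pu₍₁₎ ⊗ x ⊗ wu₍₂₎` of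
`U` on `P ⊗ X ⊗ U`; compatibility of `σ` with `μ` and `η` says that this is an action, which
holds because `Δ` is multiplicative and unital and `P` is a right module. The map `γ` is a flip,
so its axioms are formal. Both sides of the hexagon send `p ⊗ u ⊗ x ⊗ v` to
`S(v₍₃₎)u ⊗ pv₍₁₎ ⊗ x ⊗ v₍₂₎`, one through `(id ⊗ Δ)Δ v` and the other through `(Δ ⊗ id)Δ v`,
so the hexagon is coassociativity.
-/

open TensorProduct

universe u

namespace BohmStefan

variable (k : Type u) [CommRing k]
variable (U : Type u) [Ring U] [HopfAlgebra k U]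

/-- The map `v ↦ S(v₍₂₎) ⊗ v₍₁₎`. -/
noncomputable def antipodeSwap : U →ₗ[k] U ⊗[k] U :=
  (TensorProduct.comm k U U).toLinearMap ∘ₗ
    (TensorProduct.map LinearMap.id (HopfAlgebra.antipode (R := k))) ∘ₗ
      Coalgebra.comul

/-- The mixed distributive law `θ_X : (U ⊗ X) ⊗ U ⟶ U ⊗ (X ⊗ U)`,
`u ⊗ x ⊗ v ↦ S(v₍₂₎)u ⊗ x ⊗ v₍₁₎`. -/
noncomputable def thetaMap (X : Type u) [AddCommGroup X] [Module k X] :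
    (U ⊗[k] X) ⊗[k] U →ₗ[k] U ⊗[k] (X ⊗[k] U) :=
  (TensorProduct.map
      ((LinearMap.mul' k U) ∘ₗ (TensorProduct.comm k U U).toLinearMap) LinearMap.id) ∘ₗ
    (tensorTensorTensorComm k U X U U).toLinearMap ∘ₗ
      (TensorProduct.map LinearMap.id (antipodeSwap k U))

/-- The multiplication `μ_P : (P ⊗ U) ⊗ U ⟶ P ⊗ U` of the monad `B = (−) ⊗ U`. -/
noncomputable def muMap (P : Type u) [AddCommGroup P] [Module k P] :
    (P ⊗[k] U) ⊗[k] U →ₗ[k] P ⊗[k] U :=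
  (TensorProduct.map LinearMap.id (LinearMap.mul' k U)) ∘ₗ
    (TensorProduct.assoc k P U U).toLinearMap

/-- The unit `η_P : P ⟶ P ⊗ U`, `p ↦ p ⊗ 1`, of the monad `B = (−) ⊗ U`. -/
noncomputable def etaMap (P : Type u) [AddCommGroup P] [Module k P] :
    P →ₗ[k] P ⊗[k] U :=
  (TensorProduct.mk k P U).flip 1

/-- The comultiplication `Δ_P : U ⊗ P ⟶ U ⊗ (U ⊗ P)` of the comonad `D = U ⊗ (−)`. -/
noncomputable def deltaMap (P : Type u) [AddCommGroup P] [Module k P] :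
    U ⊗[k] P →ₗ[k] U ⊗[k] (U ⊗[k] P) :=
  (TensorProduct.assoc k U U P).toLinearMap ∘ₗ
    (TensorProduct.map Coalgebra.comul LinearMap.id)

/-- The counit `ε_P : U ⊗ P ⟶ P` of the comonad `D = U ⊗ (−)`. -/
noncomputable def epsMap (P : Type u) [AddCommGroup P] [Module k P] :
    U ⊗[k] P →ₗ[k] P :=
  (TensorProduct.lid k P).toLinearMap ∘ₗ
    (TensorProduct.map (Coalgebra.counit (R := k)) LinearMap.id)

variable (P : Type u) [AddCommGroup P] [Module k P]
variable [Module Uᵐᵒᵖ P] [IsScalarTower k Uᵐᵒᵖ P] [SMulCommClass k Uᵐᵒᵖ P]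

/-- The right action `P ⊗ U ⟶ P`, `p ⊗ u ↦ p·u`, of `U` on a right `U`-module `P`. -/
noncomputable def actP : P ⊗[k] U →ₗ[k] P :=
  TensorProduct.lift (LinearMap.mk₂ k (fun p u => MulOpposite.op u • p)
    (fun p p' u => smul_add _ _ _)
    (fun c p u => smul_comm _ _ _)
    (fun p u u' => by (try simp only []); rw [MulOpposite.op_add, add_smul])
    (fun c p u => by (try simp only []); rw [MulOpposite.op_smul, smul_assoc]))

/-- The distributive law `σ_X : (P ⊗ X) ⊗ U ⟶ P ⊗ (X ⊗ U)`,
`p ⊗ x ⊗ u ↦ pu₍₁₎ ⊗ x ⊗ u₍₂₎`. -/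
noncomputable def sigmaMap (X : Type u) [AddCommGroup X] [Module k X] :
    (P ⊗[k] X) ⊗[k] U →ₗ[k] P ⊗[k] (X ⊗[k] U) :=
  (TensorProduct.map (actP k U P) LinearMap.id) ∘ₗ
    (tensorTensorTensorComm k P X U U).toLinearMap ∘ₗ
      (TensorProduct.map LinearMap.id Coalgebra.comul)

/-- The distributive law `γ_X : P ⊗ (U ⊗ X) ⟶ U ⊗ (P ⊗ X)`, `p ⊗ u ⊗ x ↦ u ⊗ p ⊗ x`. -/
noncomputable def gammaMap (X : Type u) [AddCommGroup X] [Module k X] :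
    P ⊗[k] (U ⊗[k] X) →ₗ[k] U ⊗[k] (P ⊗[k] X) :=
  (TensorProduct.leftComm k P U X).toLinearMap

open Coalgebra

@[simp]
lemma actP_tmul (p : P) (u : U) : actP k U P (p ⊗ₜ u) = MulOpposite.op u • p := by
  simp [actP]

lemma sigmaMap_tmul (X : Type u) [AddCommGroup X] [Module k X] (p : P) (x : X) (u : U) :
    sigmaMap k U P X ((p ⊗ₜ x) ⊗ₜ u) =
      map (actP k U P ∘ₗ mk k P U p) (mk k X U x) (comul u) := by
  have h : map (actP k U P) LinearMap.id ∘ₗ (tensorTensorTensorComm k P X U U).toLinearMap ∘ₗ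
      mk k (P ⊗[k] X) (U ⊗[k] U) (p ⊗ₜ x) = map (actP k U P ∘ₗ mk k P U p) (mk k X U x) := by
    ext a b
    simp
  exact congr($h (comul u))

lemma thetaMap_tmul (X : Type u) [AddCommGroup X] [Module k X] (u : U) (x : X) (v : U) :
    thetaMap k U X ((u ⊗ₜ x) ⊗ₜ v) =
      TensorProduct.comm k _ _
        (map (mk k X U x) (LinearMap.mulRight k u ∘ₗ HopfAlgebra.antipode k) (comul v)) := by
  have h : map (LinearMap.mul' k U ∘ₗ (TensorProduct.comm k U U).toLinearMap) LinearMap.id ∘ₗ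
      (tensorTensorTensorComm k U X U U).toLinearMap ∘ₗ mk k (U ⊗[k] X) (U ⊗[k] U) (u ⊗ₜ x) ∘ₗ
      (TensorProduct.comm k U U).toLinearMap ∘ₗ map LinearMap.id (HopfAlgebra.antipode k) =
      (TensorProduct.comm k _ _).toLinearMap ∘ₗ
        map (mk k X U x) (LinearMap.mulRight k u ∘ₗ HopfAlgebra.antipode k) := by
    ext a b
    simp
  exact congr($h (comul v))

lemma sigmaMap_naturality (X Y : Type u) [AddCommGroup X] [Module k X] [AddCommGroup Y]
    [Module k Y] (f : X →ₗ[k] Y) :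
    sigmaMap k U P Y ∘ₗ map (map LinearMap.id f) LinearMap.id =
      map LinearMap.id (map f LinearMap.id) ∘ₗ sigmaMap k U P X := by
  ext p x u
  change sigmaMap k U P Y ((p ⊗ₜ f x) ⊗ₜ u) =
    map LinearMap.id (map f LinearMap.id) (sigmaMap k U P X ((p ⊗ₜ x) ⊗ₜ u))
  rw [sigmaMap_tmul, sigmaMap_tmul, ← LinearMap.comp_apply (map LinearMap.id _), ← map_comp]
  rfl

lemma gammaMap_naturality (X Y : Type u) [AddCommGroup X] [Module k X] [AddCommGroup Y]
    [Module k Y] (f : X →ₗ[k] Y) :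
    gammaMap k U P Y ∘ₗ map LinearMap.id (map LinearMap.id f) =
      map LinearMap.id (map LinearMap.id f) ∘ₗ gammaMap k U P X := by
  ext p u x
  simp [gammaMap]

lemma sigmaMap_comp_muMap (X : Type u) [AddCommGroup X] [Module k X] :
    sigmaMap k U P X ∘ₗ muMap k U (P ⊗[k] X) =
      map LinearMap.id (muMap k U X) ∘ₗ sigmaMap k U P (X ⊗[k] U) ∘ₗ
        map (sigmaMap k U P X) LinearMap.id := by
  ext p x u v
  simp only [AlgebraTensorModule.curry_apply, curry_apply, LinearMap.coe_restrictScalars,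
    LinearMap.comp_apply, map_tmul, LinearMap.id_apply, sigmaMap_tmul, muMap,
    LinearEquiv.coe_coe, TensorProduct.assoc_tmul, LinearMap.mul'_apply, Bialgebra.comul_mul]
  induction comul (R := k) u using TensorProduct.induction_on with
  | zero => simp
  | add w w' hw hw' => simp only [add_mul, map_add, add_tmul, hw, hw']
  | tmul a b =>
    simp only [map_tmul, LinearMap.comp_apply, mk_apply, actP_tmul, sigmaMap_tmul]
    induction comul (R := k) v using TensorProduct.induction_on with
    | zero => simp
    | add w w' hw hw' => simp only [mul_add, map_add, hw, hw']
    | tmul c d => simp [mul_smul]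

lemma sigmaMap_comp_etaMap (X : Type u) [AddCommGroup X] [Module k X] :
    sigmaMap k U P X ∘ₗ etaMap k U (P ⊗[k] X) = map LinearMap.id (etaMap k U X) := by
  ext p x
  simp [etaMap, sigmaMap_tmul, Algebra.TensorProduct.one_def]

lemma deltaMap_comp_gammaMap (X : Type u) [AddCommGroup X] [Module k X] :
    deltaMap k U (P ⊗[k] X) ∘ₗ gammaMap k U P X =
      map LinearMap.id (gammaMap k U P X) ∘ₗ gammaMap k U P (U ⊗[k] X) ∘ₗ
        map LinearMap.id (deltaMap k U X) := by
  ext p u x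
  simp only [AlgebraTensorModule.curry_apply, curry_apply, LinearMap.coe_restrictScalars,
    LinearMap.comp_apply, map_tmul, LinearMap.id_apply, deltaMap, gammaMap,
    LinearEquiv.coe_coe, leftComm_tmul]
  induction comul (R := k) u using TensorProduct.induction_on with
  | zero => simp
  | add w w' hw hw' => simp only [map_add, add_tmul, tmul_add, hw, hw']
  | tmul a b => simp

lemma epsMap_comp_gammaMap (X : Type u) [AddCommGroup X] [Module k X] :
    epsMap k U (P ⊗[k] X) ∘ₗ gammaMap k U P X = map LinearMap.id (epsMap k U X) := by
  ext p u x
  simp [epsMap, gammaMap]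

lemma gammaMap_comp_thetaMap_comp_sigmaMap_tmul (X : Type u) [AddCommGroup X] [Module k X]
    (p : P) (u : U) (x : X) (v : U) :
    (gammaMap k U P (X ⊗[k] U) ∘ₗ map LinearMap.id (thetaMap k U X) ∘ₗ
        sigmaMap k U P (U ⊗[k] X)) ((p ⊗ₜ (u ⊗ₜ x)) ⊗ₜ v) =
      gammaMap k U P (X ⊗[k] U) (map (actP k U P ∘ₗ mk k P U p)
        ((TensorProduct.comm k _ _).toLinearMap ∘ₗ
          map (mk k X U x) (LinearMap.mulRight k u ∘ₗ HopfAlgebra.antipode k))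
        (comul.lTensor U (comul v))) := by
  have h : map LinearMap.id (thetaMap k U X) ∘ₗ
      map (actP k U P ∘ₗ mk k P U p) (mk k _ U (u ⊗ₜ x)) =
      map (actP k U P ∘ₗ mk k P U p) ((TensorProduct.comm k _ _).toLinearMap ∘ₗ
          map (mk k X U x) (LinearMap.mulRight k u ∘ₗ HopfAlgebra.antipode k)) ∘ₗ
        comul.lTensor U := by
    ext a b
    simp [thetaMap_tmul]
  rw [LinearMap.comp_apply, LinearMap.comp_apply, sigmaMap_tmul,
    ← LinearMap.comp_apply (map _ _), h]
  rfl

lemma sigmaMap_comp_thetaMap_comp_gammaMap_tmul (X : Type u) [AddCommGroup X] [Module k X]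
    (p : P) (u : U) (x : X) (v : U) :
    (map LinearMap.id (sigmaMap k U P X) ∘ₗ thetaMap k U (P ⊗[k] X) ∘ₗ
        map (gammaMap k U P X) LinearMap.id) ((p ⊗ₜ (u ⊗ₜ x)) ⊗ₜ v) =
      TensorProduct.comm k _ _ (map (map (actP k U P ∘ₗ mk k P U p) (mk k X U x))
        (LinearMap.mulRight k u ∘ₗ HopfAlgebra.antipode k) (comul.rTensor U (comul v))) := by
  have h : map LinearMap.id (sigmaMap k U P X) ∘ₗ (TensorProduct.comm k _ _).toLinearMap ∘ₗ
      map (mk k _ U (p ⊗ₜ x)) (LinearMap.mulRight k u ∘ₗ HopfAlgebra.antipode k) =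
      (TensorProduct.comm k _ _).toLinearMap ∘ₗ
        map (map (actP k U P ∘ₗ mk k P U p) (mk k X U x))
          (LinearMap.mulRight k u ∘ₗ HopfAlgebra.antipode k) ∘ₗ comul.rTensor U := by
    ext a b
    simp [sigmaMap_tmul]
  simp only [LinearMap.comp_apply, map_tmul, gammaMap, LinearEquiv.coe_coe, leftComm_tmul,
    LinearMap.id_apply, thetaMap_tmul]
  exact congr($h (comul v))

lemma gammaMap_comp_thetaMap_comp_sigmaMap (X : Type u) [AddCommGroup X] [Module k X] :
    gammaMap k U P (X ⊗[k] U) ∘ₗ map LinearMap.id (thetaMap k U X) ∘ₗ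
        sigmaMap k U P (U ⊗[k] X) =
      map LinearMap.id (sigmaMap k U P X) ∘ₗ thetaMap k U (P ⊗[k] X) ∘ₗ
        map (gammaMap k U P X) LinearMap.id := by
  ext p u x v
  simp only [AlgebraTensorModule.curry_apply, curry_apply, LinearMap.coe_restrictScalars]
  rw [gammaMap_comp_thetaMap_comp_sigmaMap_tmul, sigmaMap_comp_thetaMap_comp_gammaMap_tmul,
    ← coassoc_symm_apply]
  generalize (comul (R := k)).lTensor U (comul v) = w
  induction w using TensorProduct.induction_on with
  | zero => simp
  | add w w' hw hw' => simp only [map_add, hw, hw']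
  | tmul a bc =>
    induction bc using TensorProduct.induction_on with
    | zero => simp
    | add w w' hw hw' => simp only [tmul_add, map_add, hw, hw']
    | tmul b c => simp [gammaMap]

/-- for a Hopf algebra `U` over `k` and a right `U`-module `P`, the
triple `(P ⊗ −, σ, γ)` with `σ_X(p ⊗ x ⊗ u) = pu₍₁₎ ⊗ x ⊗ u₍₂₎` and
`γ_X(p ⊗ u ⊗ x) = u ⊗ p ⊗ x` is a factorisation of the mixed distributive law
`θ : B ⟶ D`, `θ_X(u ⊗ x ⊗ v) = S(v₍₂₎)u ⊗ x ⊗ v₍₁₎`. -/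
theorem rightModule_factorisation :
    -- naturality of `σ` and `γ` in `X`:
    (∀ (X Y : Type u) [AddCommGroup X] [Module k X] [AddCommGroup Y] [Module k Y]
        (f : X →ₗ[k] Y),
      sigmaMap k U P Y ∘ₗ
          (TensorProduct.map (TensorProduct.map LinearMap.id f) LinearMap.id) =
        (TensorProduct.map LinearMap.id (TensorProduct.map f LinearMap.id)) ∘ₗ
          sigmaMap k U P X) ∧
    (∀ (X Y : Type u) [AddCommGroup X] [Module k X] [AddCommGroup Y] [Module k Y]
        (f : X →ₗ[k] Y),
      gammaMap k U P Y ∘ₗ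
          (TensorProduct.map LinearMap.id (TensorProduct.map LinearMap.id f)) =
        (TensorProduct.map LinearMap.id (TensorProduct.map LinearMap.id f)) ∘ₗ
          gammaMap k U P X) ∧
    -- `σ` is a distributive law from the monad `B = (−) ⊗ U` to `P ⊗ (−)`:
    (∀ (X : Type u) [AddCommGroup X] [Module k X],
      sigmaMap k U P X ∘ₗ muMap k U (P ⊗[k] X) =
        (TensorProduct.map LinearMap.id (muMap k U X)) ∘ₗ
          sigmaMap k U P (X ⊗[k] U) ∘ₗ
            (TensorProduct.map (sigmaMap k U P X) LinearMap.id)) ∧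
    (∀ (X : Type u) [AddCommGroup X] [Module k X],
      sigmaMap k U P X ∘ₗ etaMap k U (P ⊗[k] X) =
        TensorProduct.map LinearMap.id (etaMap k U X)) ∧
    -- `γ` is a distributive law from `P ⊗ (−)` to the comonad `D = U ⊗ (−)`:
    (∀ (X : Type u) [AddCommGroup X] [Module k X],
      deltaMap k U (P ⊗[k] X) ∘ₗ gammaMap k U P X =
        (TensorProduct.map LinearMap.id (gammaMap k U P X)) ∘ₗ
          gammaMap k U P (U ⊗[k] X) ∘ₗ
            (TensorProduct.map LinearMap.id (deltaMap k U X))) ∧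
    (∀ (X : Type u) [AddCommGroup X] [Module k X],
      epsMap k U (P ⊗[k] X) ∘ₗ gammaMap k U P X =
        TensorProduct.map LinearMap.id (epsMap k U X)) ∧
    -- the Yang–Baxter hexagon with `θ`:
    (∀ (X : Type u) [AddCommGroup X] [Module k X],
      gammaMap k U P (X ⊗[k] U) ∘ₗ
          (TensorProduct.map LinearMap.id (thetaMap k U X)) ∘ₗ
            sigmaMap k U P (U ⊗[k] X) =
        (TensorProduct.map LinearMap.id (sigmaMap k U P X)) ∘ₗ
          thetaMap k U (P ⊗[k] X) ∘ₗ
            (TensorProduct.map (gammaMap k U P X) LinearMap.id)) :=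
  ⟨fun X Y _ _ _ _ f => sigmaMap_naturality k U P X Y f,
   fun X Y _ _ _ _ f => gammaMap_naturality k U P X Y f,
   fun X _ _ => sigmaMap_comp_muMap k U P X,
   fun X _ _ => sigmaMap_comp_etaMap k U P X,
   fun X _ _ => deltaMap_comp_gammaMap k U P X,
   fun X _ _ => epsMap_comp_gammaMap k U P X,
   fun X _ _ => gammaMap_comp_thetaMap_comp_sigmaMap k U P X⟩

end BohmStefan
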